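/- Let q be a complex number with 0 < |q| < 1. Define the sequence α by α_0 = 1, and for n ≥ 1: α_{3n−1} = (−q^{6n²−5n+1} + q^{6n²+n})/(1−q), α_{3n} = (q^{6n²−n} − q^{6n²+5n+1})/(1−q), and for n ≥ 0: α_{3n+1} = 0 (with the convention that the value at index 0 is α_0 = 1). Then for every integer n ≥ 0, 1/(q;q)_{2n} = ∑_{i=0}^n α_i / ((q;q)_{n−i} (q^2;q)_{n+i}); that is, (α_n, 1/(q;q)_{2n}) is a Bailey pair relative to (q;q). -/

import Mathlib

open scoped BigOperators

/-- Finite q-Pochhammer symbol $(a;q)_n = \prod_{k=0}^{n-1}(1-aq^k)$. -/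
noncomputable def qPoch (a q : ℂ) (n : ℕ) : ℂ := ∏ k ∈ Finset.range n, (1 - a * q ^ k)

/-- Infinite q-Pochhammer symbol $(a;q)_\infty = \prod_{k=0}^{\infty}(1-aq^k)$. -/
noncomputable def qPochInf (a q : ℂ) : ℂ := ∏' k : ℕ, (1 - a * q ^ k)

/-- Jacobi theta function $j(z;q) = (z;q)_\infty (q/z;q)_\infty (q;q)_\infty$. -/
noncomputable def jt (z q : ℂ) : ℂ := qPochInf z q * qPochInf (q / z) q * qPochInf q q

/-- $J_{a,m} = j(q^a;q^m)$. -/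
noncomputable def Jq (q : ℂ) (a m : ℕ) : ℂ := jt (q ^ a) (q ^ m)

/-- $\bar J_{a,m} = j(-q^a;q^m)$. -/
noncomputable def Jbq (q : ℂ) (a m : ℕ) : ℂ := jt (-q ^ a) (q ^ m)

/-- $J_m = (q^m;q^m)_\infty$. -/
noncomputable def Jmq (q : ℂ) (m : ℕ) : ℂ := qPochInf (q ^ m) (q ^ m)

/-- sign function: 1 for r ≥ 0, -1 for r < 0. -/
noncomputable def sg (r : ℤ) : ℂ := if 0 ≤ r then 1 else -1

/-- Hecke-type series
$f_{a,b,c}(x,y,q) = \sum_{sg(r)=sg(s)} sg(r)(-1)^{r+s} x^r y^s q^{a\binom r2 + brs + c\binom s2}$. -/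
noncomputable def hecke (a b c : ℤ) (x y q : ℂ) : ℂ :=
  ∑' p : ℤ × ℤ,
    if (0 ≤ p.1 ↔ 0 ≤ p.2) then
      sg p.1 * (-1 : ℂ) ^ (p.1 + p.2) * x ^ p.1 * y ^ p.2 *
        q ^ (a * (p.1 * (p.1 - 1) / 2) + b * p.1 * p.2 + c * (p.2 * (p.2 - 1) / 2))
    else 0

/-- Appell–Lerch sum
$m(x,q,z) = \frac{1}{j(z;q)} \sum_{r\in\mathbb Z} \frac{(-1)^r q^{\binom r2} z^r}{1-q^{r-1}xz}$. -/
noncomputable def appell (x q z : ℂ) : ℂ :=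
  (1 / jt z q) *
    ∑' r : ℤ, (-1 : ℂ) ^ r * q ^ (r * (r - 1) / 2) * z ^ r / (1 - q ^ (r - 1) * x * z)

/-!
The pair comes from Bailey inversion. For `a = q` the lower triangular matrix
`1 / ((q;q)_{n-i} (q²;q)_{n+i})` has the explicit inverse `baileyInv`; the orthogonality relation
behind this is the vanishing of a terminating very-well-poised sum, whose partial sums telescope.
Applying the inverse to `β_j = 1 / (q;q)_{2j}` gives `α_i = (1 - q^{2i+1}) / (1 - q) · B_{2i}` with
`B_N = altGaussSum q 0 N = ∑_k (-1)^k q^{k(k-1)/2} [N-k choose k]_q`. The two q-Pascal rules give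
`B_{N+3} = -q^{N+1} B_N`, so `B` is determined by `B_0 = B_1 = 1`, `B_2 = 0`, and its values at
`6m`, `6m+2`, `6m+4` reproduce the given `α`.
-/

open Finset

section QPochhammer

variable (q : ℂ)

theorem qPoch_zero (a : ℂ) : qPoch a q 0 = 1 := prod_range_zero _

theorem qPoch_succ (a : ℂ) (n : ℕ) : qPoch a q (n + 1) = qPoch a q n * (1 - a * q ^ n) :=
  prod_range_succ _ _

theorem qPoch_add (a : ℂ) (m n : ℕ) :
    qPoch a q (m + n) = qPoch a q m * qPoch (a * q ^ m) q n := by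
  simp only [qPoch, prod_range_add, mul_assoc, pow_add]

theorem qPoch_succ' (a : ℂ) (n : ℕ) : qPoch a q (n + 1) = (1 - a) * qPoch (a * q) q n := by
  rw [add_comm, qPoch_add, pow_one, qPoch, prod_range_one, pow_zero, mul_one]

theorem qPoch_self_succ (n : ℕ) : qPoch q q (n + 1) = (1 - q) * qPoch (q ^ 2) q n := by
  rw [qPoch_succ', sq]

theorem one_sub_pow_ne_zero (hq : ‖q‖ < 1) {m : ℕ} (hm : m ≠ 0) : 1 - q ^ m ≠ 0 := by
  refine sub_ne_zero.2 fun h => ?_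
  have := pow_lt_one₀ (norm_nonneg q) hq hm
  rw [← norm_pow, ← h, norm_one] at this
  exact lt_irrefl _ this

theorem qPoch_pow_ne_zero (hq : ‖q‖ < 1) {s : ℕ} (hs : s ≠ 0) (n : ℕ) :
    qPoch (q ^ s) q n ≠ 0 :=
  prod_ne_zero_iff.2 fun k _ => by
    rw [← pow_add]; exact one_sub_pow_ne_zero q hq (by omega)

theorem qPoch_self_ne_zero (hq : ‖q‖ < 1) (n : ℕ) : qPoch q q n ≠ 0 := by
  simpa using qPoch_pow_ne_zero q hq one_ne_zero n

end QPochhammer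

section GaussBinom

variable {R : Type*} [CommRing R] (q : R)

-- The truncated `n - k` only occurs where `gaussBinom q n k = 0`.
def gaussBinom : ℕ → ℕ → R
  | 0, 0 => 1
  | 0, _ + 1 => 0
  | _ + 1, 0 => 1
  | n + 1, k + 1 => gaussBinom n (k + 1) + q ^ (n - k) * gaussBinom n k

@[simp]
theorem gaussBinom_zero_right (n : ℕ) : gaussBinom q n 0 = 1 := by cases n <;> rfl

theorem gaussBinom_succ_succ (n k : ℕ) :
    gaussBinom q (n + 1) (k + 1) = gaussBinom q n (k + 1) + q ^ (n - k) * gaussBinom q n k :=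
  rfl

theorem gaussBinom_of_lt : ∀ {n k : ℕ}, n < k → gaussBinom q n k = 0
  | 0, _ + 1, _ => rfl
  | n + 1, k + 1, h => by
    rw [gaussBinom_succ_succ, gaussBinom_of_lt (by omega), gaussBinom_of_lt (by omega), mul_zero,
      add_zero]

@[simp]
theorem gaussBinom_self (n : ℕ) : gaussBinom q n n = 1 := by
  induction n with
  | zero => rfl
  | succ n ih => rw [gaussBinom_succ_succ, gaussBinom_of_lt q n.lt_succ_self, ih, Nat.sub_self,
      pow_zero, mul_one, zero_add]

theorem one_sub_pow_mul_gaussBinom_succ (n k : ℕ) :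
    (1 - q ^ (k + 1)) * gaussBinom q n (k + 1) = (1 - q ^ (n - k)) * gaussBinom q n k := by
  induction n generalizing k with
  | zero => cases k <;> simp [gaussBinom_of_lt]
  | succ n ih =>
    rcases k with _ | k
    · have h := ih 0
      rw [gaussBinom_succ_succ]
      simp only [gaussBinom_zero_right, Nat.sub_zero, zero_add, mul_one] at h ⊢
      linear_combination h
    · obtain hkn | hnk := lt_or_ge k n
      · obtain ⟨d, rfl⟩ : ∃ d, n = k + 1 + d := ⟨n - (k + 1), by omega⟩
        have h₁ := ih (k + 1)
        have h₂ := ih k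
        simp only [gaussBinom_succ_succ, show k + 1 + d - (k + 1) = d by omega,
          show k + 1 + d - k = d + 1 by omega, show k + 1 + d + 1 - (k + 1) = d + 1 by omega]
          at h₁ h₂ ⊢
        linear_combination h₁ + q ^ (d + 1) * h₂
      · rw [gaussBinom_of_lt q (by omega : n + 1 < k + 1 + 1),
          show n + 1 - (k + 1) = 0 by omega, pow_zero, sub_self, zero_mul, mul_zero]

theorem gaussBinom_succ_succ' (n k : ℕ) :
    gaussBinom q (n + 1) (k + 1) = q ^ (k + 1) * gaussBinom q n (k + 1) + gaussBinom q n k := by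
  linear_combination gaussBinom_succ_succ q n k + one_sub_pow_mul_gaussBinom_succ q n k

end GaussBinom

theorem gaussBinom_mul_qPoch (q : ℂ) {n k : ℕ} (hk : k ≤ n) :
    gaussBinom q n k * (qPoch q q k * qPoch q q (n - k)) = qPoch q q n := by
  induction n generalizing k with
  | zero => simp [Nat.le_zero.1 hk, qPoch_zero]
  | succ n ih =>
    rcases k with _ | k
    · simp [qPoch_zero]
    obtain rfl | hkn := eq_or_lt_of_le (Nat.le_of_succ_le_succ hk)
    · simp [qPoch_zero]
    obtain ⟨d, rfl⟩ : ∃ d, n = k + 1 + d := ⟨n - (k + 1), by omega⟩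
    have h₁ := ih (k := k + 1) (by omega)
    have h₂ := ih (k := k) (by omega)
    simp only [show k + 1 + d - (k + 1) = d by omega, show k + 1 + d - k = d + 1 by omega]
      at h₁ h₂
    rw [show k + 1 + d + 1 - (k + 1) = d + 1 by omega, gaussBinom_succ_succ',
      qPoch_succ q q (k + 1 + d)]
    simp only [qPoch_succ q q k, qPoch_succ q q d] at h₁ h₂ ⊢
    linear_combination q ^ (k + 1) * (1 - q * q ^ d) * h₁ + (1 - q * q ^ k) * h₂

theorem gaussBinom_eq_div (q : ℂ) (hq : ‖q‖ < 1) {n k : ℕ} (hk : k ≤ n) :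
    gaussBinom q n k = qPoch q q n / (qPoch q q k * qPoch q q (n - k)) :=
  eq_div_of_mul_eq (mul_ne_zero (qPoch_self_ne_zero q hq k) (qPoch_self_ne_zero q hq _))
    (gaussBinom_mul_qPoch q hk)

section AltGaussSum

variable {R : Type*} [CommRing R] (q : R)

def altGaussSum (c N : ℕ) : R :=
  ∑ k ∈ range (N + 1), (-1) ^ k * q ^ (k.choose 2 + c * k) * gaussBinom q (N - k) k

theorem altGaussSum_zero_add_two (N : ℕ) :
    altGaussSum q 0 (N + 2) = altGaussSum q 1 (N + 1) - altGaussSum q 1 N := by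
  have hterm : ∀ k ∈ range (N + 1),
      (-1) ^ (k + 1) * q ^ ((k + 1).choose 2 + 0 * (k + 1)) *
          gaussBinom q (N + 2 - (k + 1)) (k + 1) =
        (-1) ^ (k + 1) * q ^ ((k + 1).choose 2 + 1 * (k + 1)) *
            gaussBinom q (N + 1 - (k + 1)) (k + 1) -
          (-1) ^ k * q ^ (k.choose 2 + 1 * k) * gaussBinom q (N - k) k := by
    intro k hk
    have hkN := mem_range.1 hk
    rw [show N + 2 - (k + 1) = N - k + 1 by omega, show N + 1 - (k + 1) = N - k by omega,
      gaussBinom_succ_succ', Nat.choose_succ_succ', Nat.choose_one_right]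
    ring
  rw [altGaussSum, sum_range_succ, Nat.sub_self, gaussBinom_of_lt q (by omega : 0 < N + 2),
    sum_range_succ', sum_congr rfl hterm, sum_sub_distrib, altGaussSum, altGaussSum,
    sum_range_succ' _ (N + 1)]
  simp only [zero_mul, one_mul, add_zero, pow_zero, Nat.choose_zero_succ, Nat.sub_zero,
    gaussBinom_zero_right, mul_one]
  ring

theorem altGaussSum_one_add_two (N : ℕ) :
    altGaussSum q 1 (N + 2) = altGaussSum q 1 (N + 1) - q ^ (N + 1) * altGaussSum q 0 N := by
  have hterm : ∀ k ∈ range (N + 1),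
      (-1) ^ (k + 1) * q ^ ((k + 1).choose 2 + 1 * (k + 1)) *
          gaussBinom q (N + 2 - (k + 1)) (k + 1) =
        (-1) ^ (k + 1) * q ^ ((k + 1).choose 2 + 1 * (k + 1)) *
            gaussBinom q (N + 1 - (k + 1)) (k + 1) -
          q ^ (N + 1) * ((-1) ^ k * q ^ (k.choose 2 + 0 * k) * gaussBinom q (N - k) k) := by
    intro k hk
    have hkN := mem_range.1 hk
    rw [show N + 2 - (k + 1) = N - k + 1 by omega, show N + 1 - (k + 1) = N - k by omega,
      gaussBinom_succ_succ, Nat.choose_succ_succ', Nat.choose_one_right]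
    obtain h2k | h2k := le_or_gt (2 * k) N
    · obtain ⟨d, rfl⟩ : ∃ d, N = 2 * k + d := ⟨N - 2 * k, by omega⟩
      rw [show 2 * k + d - k - k = d by omega]
      ring
    · rw [gaussBinom_of_lt q (by omega : N - k < k)]
      ring
  rw [altGaussSum, sum_range_succ, Nat.sub_self, gaussBinom_of_lt q (by omega : 0 < N + 2),
    sum_range_succ', sum_congr rfl hterm, sum_sub_distrib, ← mul_sum, altGaussSum, altGaussSum,
    sum_range_succ' _ (N + 1)]
  simp only [zero_mul, one_mul, add_zero, pow_zero, Nat.choose_zero_succ, Nat.sub_zero,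
    gaussBinom_zero_right, mul_one]
  ring

theorem altGaussSum_zero_add_three (N : ℕ) :
    altGaussSum q 0 (N + 3) = -q ^ (N + 1) * altGaussSum q 0 N := by
  rw [altGaussSum_zero_add_two, altGaussSum_one_add_two]
  ring

theorem altGaussSum_zero_add_six (N : ℕ) :
    altGaussSum q 0 (N + 6) = q ^ (2 * N + 5) * altGaussSum q 0 N := by
  rw [altGaussSum_zero_add_three, altGaussSum_zero_add_three]
  ring

theorem altGaussSum_zero_six_mul (m : ℕ) : altGaussSum q 0 (6 * m) = q ^ (6 * m ^ 2 - m) := by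
  induction m with
  | zero => simp [altGaussSum]
  | succ m ih =>
    have hm : m ≤ 6 * m ^ 2 := by nlinarith
    rw [show 6 * (m + 1) = 6 * m + 6 by ring, altGaussSum_zero_add_six, ih, ← pow_add]
    congr 1
    ring_nf
    omega

theorem altGaussSum_zero_six_mul_add_two (m : ℕ) : altGaussSum q 0 (6 * m + 2) = 0 := by
  induction m with
  | zero => simp [altGaussSum, sum_range_succ, gaussBinom_of_lt]
  | succ m ih =>
    rw [show 6 * (m + 1) + 2 = 6 * m + 2 + 6 by ring, altGaussSum_zero_add_six, ih, mul_zero]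

theorem altGaussSum_zero_six_mul_add_four (m : ℕ) :
    altGaussSum q 0 (6 * m + 4) = -q ^ (6 * m ^ 2 + 7 * m + 2) := by
  induction m with
  | zero =>
    rw [show 6 * 0 + 4 = 1 + 3 by rfl, altGaussSum_zero_add_three]
    simp [altGaussSum, sum_range_succ, gaussBinom_of_lt]
  | succ m ih =>
    rw [show 6 * (m + 1) + 4 = 6 * m + 4 + 6 by ring, altGaussSum_zero_add_six, ih]
    ring

end AltGaussSum

theorem altGaussSum_zero_two_mul (q : ℂ) (hq : ‖q‖ < 1) (i : ℕ) :
    altGaussSum q 0 (2 * i) = ∑ j ∈ range (i + 1),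
      (-1) ^ (i - j) * q ^ (i - j).choose 2 * qPoch q q (i + j) /
        (qPoch q q (i - j) * qPoch q q (2 * j)) := by
  have hvanish : ∀ k ∈ range (2 * i + 1), k ∉ range (i + 1) →
      (-1) ^ k * q ^ (k.choose 2 + 0 * k) * gaussBinom q (2 * i - k) k = 0 := by
    intro k _ hk
    have : 2 * i - k < k := by simp only [mem_range, not_lt] at hk; omega
    rw [gaussBinom_of_lt q this, mul_zero]
  rw [altGaussSum, ← sum_subset (range_subset_range.2 (by omega)) hvanish, ← sum_range_reflect]
  refine sum_congr rfl fun j hj => ?_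
  have hji := mem_range_succ_iff.1 hj
  rw [Nat.add_sub_cancel, show 2 * i - (i - j) = i + j by omega,
    gaussBinom_eq_div q hq (by omega : i - j ≤ i + j), show i + j - (i - j) = 2 * j by omega]
  ring

section WellPoised

variable (q : ℂ)

noncomputable def wellPoisedTerm (x : ℂ) (L k : ℕ) : ℂ :=
  (-1) ^ k * q ^ k.choose 2 * gaussBinom q L k * qPoch x q k * (1 - x * q ^ (2 * k)) *
    qPoch (x * q ^ (L + 1 + k)) q (L - k)

theorem sum_range_wellPoisedTerm (x : ℂ) {L m : ℕ} (hm : m < L) :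
    ∑ k ∈ range (m + 1), wellPoisedTerm q x L k =
      (-1) ^ m * q ^ (m + 1).choose 2 * gaussBinom q (L - 1) m * qPoch x q (m + 1) *
        qPoch (x * q ^ (L + m + 1)) q (L - m) := by
  induction m with
  | zero =>
    obtain ⟨L, rfl⟩ : ∃ L', L = L' + 1 := ⟨L - 1, by omega⟩
    simp [wellPoisedTerm, qPoch_succ, qPoch_zero]
  | succ m ih =>
    obtain ⟨d, rfl⟩ : ∃ d, L = m + 1 + d + 1 := ⟨L - (m + 2), by omega⟩
    have habs := one_sub_pow_mul_gaussBinom_succ q (m + 1 + d) m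
    rw [show m + 1 + d - m = d + 1 by omega] at habs
    rw [sum_range_succ, ih (by omega), wellPoisedTerm, Nat.add_sub_cancel,
      show m + 1 + d + 1 - m = d + 1 + 1 by omega, show m + 1 + d + 1 - (m + 1) = d + 1 by omega,
      gaussBinom_succ_succ', qPoch_succ' q _ (d + 1), qPoch_succ q x (m + 1),
      Nat.choose_succ_succ' (m + 1), Nat.choose_one_right, mul_assoc x, ← pow_succ,
      show m + 1 + d + 1 + m + 1 + 1 = 2 * m + d + 4 by omega,
      show m + 1 + d + 1 + 1 + (m + 1) = 2 * m + d + 4 by omega,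
      show m + 1 + d + 1 + (m + 1) + 1 = 2 * m + d + 4 by omega]
    linear_combination -(-1) ^ m * q ^ (m + 1).choose 2 * qPoch x q (m + 1) *
      qPoch (x * q ^ (2 * m + d + 4)) q (d + 1) * x * q ^ (2 * m + 2) * habs

theorem sum_wellPoisedTerm_eq_zero (x : ℂ) {L : ℕ} (hL : L ≠ 0) :
    ∑ k ∈ range (L + 1), wellPoisedTerm q x L k = 0 := by
  obtain ⟨L, rfl⟩ : ∃ L', L = L' + 1 := ⟨L - 1, by omega⟩
  rw [sum_range_succ, sum_range_wellPoisedTerm q x (Nat.lt_add_one L), wellPoisedTerm]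
  simp only [Nat.add_sub_cancel, Nat.add_sub_cancel_left, Nat.sub_self, gaussBinom_self,
    qPoch_zero, qPoch_succ]
  ring

end WellPoised

section BaileyInversion

variable (q : ℂ)

-- Bailey's inversion `α_i = (1 - aq^{2i}) / (1 - a) ∑_j (aq;q)_{i+j-1} (-1)^{i-j} q^{C(i-j,2)}
-- / (q;q)_{i-j} β_j` at `a = q`, where `(aq;q)_{i+j-1} = (q;q)_{i+j} / (1 - q)`.
noncomputable def baileyInv (i j : ℕ) : ℂ :=
  (1 - q ^ (2 * i + 1)) / (1 - q) *
    ((-1) ^ (i - j) * q ^ (i - j).choose 2 * qPoch q q (i + j) / qPoch q q (i - j))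

theorem baileyInv_div_qPoch (hq : ‖q‖ < 1) {j k n : ℕ} (h : j + k ≤ n) :
    baileyInv q (j + k) j / (qPoch q q (n - (j + k)) * qPoch (q ^ 2) q (n + (j + k))) =
      qPoch q q (2 * j) / (qPoch q q (n - j) * qPoch q q (2 * n + 1)) *
        wellPoisedTerm q (q ^ (2 * j + 1)) (n - j) k := by
  obtain ⟨L, rfl⟩ : ∃ L, n = j + k + L := ⟨n - (j + k), by omega⟩
  have hP := qPoch_self_ne_zero q hq
  have hnum : qPoch q q (j + k + j) = qPoch q q (2 * j) * qPoch (q ^ (2 * j + 1)) q k := by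
    rw [show j + k + j = 2 * j + k by ring, qPoch_add, ← pow_succ']
  have hden : qPoch q q (2 * (j + k + L) + 1) =
      (1 - q) * qPoch (q ^ 2) q (j + k + L + (j + k)) *
        qPoch (q ^ (2 * j + 1) * q ^ (k + L + 1 + k)) q L := by
    rw [← qPoch_self_succ, show 2 * (j + k + L) + 1 = j + k + L + (j + k) + 1 + L by ring,
      qPoch_add, ← pow_succ', ← pow_add]
    ring_nf
  have hden0 := hden ▸ hP (2 * (j + k + L) + 1)
  simp only [mul_ne_zero_iff] at hden0
  obtain ⟨⟨h1q, hQ⟩, hR⟩ := hden0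
  rw [baileyInv, wellPoisedTerm, show j + k + L - (j + k) = L by omega,
    show j + k + L - j = k + L by omega, show j + k - j = k by omega,
    gaussBinom_eq_div q hq (by omega : k ≤ k + L), show k + L - k = L by omega, hden, hnum,
    show 2 * (j + k) + 1 = 2 * j + 1 + 2 * k by ring, pow_add q (2 * j + 1)]
  have := hP k
  have := hP L
  have := hP (k + L)
  field_simp

theorem sum_baileyInv_div_qPoch (hq : ‖q‖ < 1) {j n : ℕ} (hjn : j ≤ n) :
    ∑ i ∈ Ico j (n + 1), baileyInv q i j / (qPoch q q (n - i) * qPoch (q ^ 2) q (n + i)) =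
      if j = n then 1 else 0 := by
  obtain rfl | hlt := eq_or_lt_of_le hjn
  · have h₁ : qPoch q q (2 * j + 1) = (1 - q) * qPoch (q ^ 2) q (2 * j) := qPoch_self_succ q _
    have h₂ : qPoch q q (2 * j + 1) = qPoch q q (2 * j) * (1 - q ^ (2 * j + 1)) := by
      rw [qPoch_succ, ← pow_succ']
    obtain ⟨h1q, hQ⟩ := mul_ne_zero_iff.1 (h₁ ▸ qPoch_self_ne_zero q hq (2 * j + 1))
    rw [Nat.Ico_succ_singleton, sum_singleton, if_pos rfl, baileyInv, Nat.sub_self, ← two_mul]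
    simp only [pow_zero, Nat.choose_zero_succ, qPoch_zero, one_mul, mul_one, div_one]
    field_simp
    linear_combination h₂.symm.trans h₁
  · rw [if_neg hlt.ne, sum_Ico_eq_sum_range, show n + 1 - j = n - j + 1 by omega]
    calc _ = ∑ k ∈ range (n - j + 1),
          qPoch q q (2 * j) / (qPoch q q (n - j) * qPoch q q (2 * n + 1)) *
            wellPoisedTerm q (q ^ (2 * j + 1)) (n - j) k :=
        sum_congr rfl fun k hk => baileyInv_div_qPoch q hq (by simp at hk; omega)
      _ = 0 := by rw [← mul_sum, sum_wellPoisedTerm_eq_zero q _ (by omega), mul_zero]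

theorem sum_baileyInv_mul_div_qPoch (hq : ‖q‖ < 1) (β : ℕ → ℂ) (n : ℕ) :
    ∑ i ∈ range (n + 1), (∑ j ∈ range (i + 1), baileyInv q i j * β j) /
      (qPoch q q (n - i) * qPoch (q ^ 2) q (n + i)) = β n := by
  set M : ℕ → ℂ := fun i => qPoch q q (n - i) * qPoch (q ^ 2) q (n + i)
  calc _ = ∑ j ∈ Ico 0 (n + 1), ∑ i ∈ Ico j (n + 1), baileyInv q i j * β j / M i := by
        simp only [sum_div, range_eq_Ico]
        exact (sum_Ico_Ico_comm 0 (n + 1) fun j i => baileyInv q i j * β j / M i).symm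
    _ = ∑ j ∈ range (n + 1), β j * if j = n then 1 else 0 := by
        refine sum_congr (range_eq_Ico (n + 1)).symm fun j hj => ?_
        rw [← sum_baileyInv_div_qPoch q hq (mem_range_succ_iff.1 hj), mul_sum]
        exact sum_congr rfl fun i _ => by ring
    _ = β n := by simp

theorem sum_baileyInv_mul_one_div_qPoch (hq : ‖q‖ < 1) (i : ℕ) :
    ∑ j ∈ range (i + 1), baileyInv q i j * (1 / qPoch q q (2 * j)) =
      (1 - q ^ (2 * i + 1)) / (1 - q) * altGaussSum q 0 (2 * i) := by
  rw [altGaussSum_zero_two_mul q hq, mul_sum]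
  exact sum_congr rfl fun j _ => by rw [baileyInv]; ring

end BaileyInversion

theorem alpha_eq_altGaussSum (q : ℂ) (hq : q ≠ 1) (α : ℕ → ℂ) (hα0 : α 0 = 1)
    (hα1 : ∀ n : ℕ, 1 ≤ n →
      α (3 * n - 1) = (-q ^ (6 * n ^ 2 - 5 * n + 1) + q ^ (6 * n ^ 2 + n)) / (1 - q))
    (hα2 : ∀ n : ℕ, 1 ≤ n →
      α (3 * n) = (q ^ (6 * n ^ 2 - n) - q ^ (6 * n ^ 2 + 5 * n + 1)) / (1 - q))
    (hα3 : ∀ n : ℕ, α (3 * n + 1) = 0) (n : ℕ) :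
    α n = (1 - q ^ (2 * n + 1)) / (1 - q) * altGaussSum q 0 (2 * n) := by
  rw [div_mul_eq_mul_div]
  obtain ⟨m, rfl | rfl | rfl⟩ : ∃ m, n = 3 * m ∨ n = 3 * m + 1 ∨ n = 3 * m + 2 :=
    ⟨n / 3, by omega⟩
  · obtain rfl | hm := Nat.eq_zero_or_pos m
    · simp [hα0, altGaussSum, div_self (sub_ne_zero.2 hq.symm)]
    rw [hα2 m hm, show 2 * (3 * m) = 6 * m by ring, altGaussSum_zero_six_mul]
    have : m ≤ 6 * m ^ 2 := by nlinarith
    rw [show 6 * m ^ 2 + 5 * m + 1 = 2 * (3 * m) + 1 + (6 * m ^ 2 - m) by omega, pow_add]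
    ring
  · rw [hα3, show 2 * (3 * m + 1) = 6 * m + 2 by ring, altGaussSum_zero_six_mul_add_two]
    simp
  · have h := hα1 (m + 1) (by omega)
    rw [show 3 * (m + 1) - 1 = 3 * m + 2 by omega,
      show 6 * (m + 1) ^ 2 - 5 * (m + 1) + 1 = 6 * m ^ 2 + 7 * m + 2 by ring_nf; omega,
      show 6 * (m + 1) ^ 2 + (m + 1) = 2 * (3 * m + 2) + 1 + (6 * m ^ 2 + 7 * m + 2) by ring,
      pow_add] at h
    rw [h, show 2 * (3 * m + 2) = 6 * m + 4 by ring, altGaussSum_zero_six_mul_add_four]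
    ring

theorem stmt3_general (q : ℂ) (hq1 : ‖q‖ < 1)
    (α : ℕ → ℂ) (hα0 : α 0 = 1)
    (hα1 : ∀ n : ℕ, 1 ≤ n →
      α (3 * n - 1) = (-q ^ (6 * n ^ 2 - 5 * n + 1) + q ^ (6 * n ^ 2 + n)) / (1 - q))
    (hα2 : ∀ n : ℕ, 1 ≤ n →
      α (3 * n) = (q ^ (6 * n ^ 2 - n) - q ^ (6 * n ^ 2 + 5 * n + 1)) / (1 - q))
    (hα3 : ∀ n : ℕ, α (3 * n + 1) = 0) :
    ∀ n : ℕ, 1 / qPoch q q (2 * n) =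
      ∑ i ∈ Finset.range (n + 1), α i / (qPoch q q (n - i) * qPoch (q ^ 2) q (n + i)) := by
  have hq : q ≠ 1 := by rintro rfl; simp at hq1
  have hα : ∀ i, α i = ∑ j ∈ range (i + 1), baileyInv q i j * (1 / qPoch q q (2 * j)) :=
    fun i => by
      rw [sum_baileyInv_mul_one_div_qPoch q hq1,
        alpha_eq_altGaussSum q hq α hα0 hα1 hα2 hα3]
  intro n
  simp only [hα]
  exact (sum_baileyInv_mul_div_qPoch q hq1 (fun j => 1 / qPoch q q (2 * j)) n).symm

theorem stmt3 (q : ℂ) (hq0 : 0 < ‖q‖) (hq1 : ‖q‖ < 1)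
    (α : ℕ → ℂ) (hα0 : α 0 = 1)
    (hα1 : ∀ n : ℕ, 1 ≤ n →
      α (3 * n - 1) = (-q ^ (6 * n ^ 2 - 5 * n + 1) + q ^ (6 * n ^ 2 + n)) / (1 - q))
    (hα2 : ∀ n : ℕ, 1 ≤ n →
      α (3 * n) = (q ^ (6 * n ^ 2 - n) - q ^ (6 * n ^ 2 + 5 * n + 1)) / (1 - q))
    (hα3 : ∀ n : ℕ, α (3 * n + 1) = 0) :
    ∀ n : ℕ, 1 / qPoch q q (2 * n) =
      ∑ i ∈ Finset.range (n + 1), α i / (qPoch q q (n - i) * qPoch (q ^ 2) q (n + i)) :=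
  stmt3_general q hq1 α hα0 hα1 hα2 hα3
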